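/- Memory partition theorem for buddy memory pools: if a buddy memory pool has a consistent configuration (inv_mempool_info) and well-shaped bitmaps (inv_bitmap, inv_bitmap0 and inv_bitmapn), then it satisfies the memory partition property (mem_part): for every address addr < n_max * max_sz there exists exactly one pair (i,j) with i < n_levels and j < n_max * 4^i such that block (i,j) exists and addr lies in the address interval [j * (max_sz / 4^i), (j+1) * (max_sz / 4^i)). -/
import Mathlib


namespace BuddyMem

/-- The state of a block in the bitmap of a buddy memory pool. -/
inductive BlockState : Type where
  | ALLOCATED | FREE | ALLOCATING | FREEING | DIVIDED | NOEXIST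
deriving DecidableEq

open BlockState

/-- A buddy memory pool: its configuration and the bitmaps of all its levels. -/
structure MemPool : Type where
  max_sz : ℕ
  n_max : ℕ
  n_levels : ℕ
  levels : List (List BlockState)

/-- The state of the block with index `j` at level `i`. -/
def MemPool.bit (p : MemPool) (i j : ℕ) : BlockState :=
  (p.levels.getD i []).getD j NOEXIST

/-- The block `(i,j)` physically exists: its bit is ALLOCATED, FREE,
ALLOCATING or FREEING. -/
def MemPool.isMemBlock (p : MemPool) (i j : ℕ) : Prop :=
  p.bit i j = ALLOCATED ∨ p.bit i j = FREE ∨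
  p.bit i j = ALLOCATING ∨ p.bit i j = FREEING

/-- Consistency of the memory pool configuration. -/
def inv_mempool_info (p : MemPool) : Prop :=
  (∃ n : ℕ, 0 < n ∧ p.max_sz = 4 * n * 4 ^ p.n_levels) ∧
  0 < p.n_max ∧ 0 < p.n_levels ∧
  p.levels.length = p.n_levels ∧
  ∀ i < p.n_levels, (p.levels.getD i []).length = p.n_max * 4 ^ i

/-- Well-shapedness of the bitmaps (quadtree structure). -/
def inv_bitmap (p : MemPool) : Prop :=
  ∀ i < p.n_levels, ∀ j < p.n_max * 4 ^ i,
    (p.isMemBlock i j →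
      (0 < i → p.bit (i - 1) (j / 4) = DIVIDED) ∧
      (i + 1 < p.n_levels → ∀ k < 4, p.bit (i + 1) (4 * j + k) = NOEXIST)) ∧
    (p.bit i j = DIVIDED → 0 < i → p.bit (i - 1) (j / 4) = DIVIDED) ∧
    (p.bit i j = NOEXIST →
      (i + 1 < p.n_levels → ∀ k < 4, p.bit (i + 1) (4 * j + k) = NOEXIST) ∧
      (0 < i → p.bit (i - 1) (j / 4) ≠ DIVIDED))

/-- The address space of a memory pool is nonempty: no level-0 bit is NOEXIST. -/
def inv_bitmap0 (p : MemPool) : Prop :=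
  ∀ j < p.n_max, p.bit 0 j ≠ NOEXIST

/-- Blocks at the lowest level cannot be divided. -/
def inv_bitmapn (p : MemPool) : Prop :=
  ∀ j < p.n_max * 4 ^ (p.n_levels - 1), p.bit (p.n_levels - 1) j ≠ DIVIDED

/-- Memory partition property: every address of the pool belongs to the address
space of exactly one existing memory block. -/
def mem_part (p : MemPool) : Prop :=
  ∀ addr < p.n_max * p.max_sz,
    ∃! ij : ℕ × ℕ,
      ij.1 < p.n_levels ∧ ij.2 < p.n_max * 4 ^ ij.1 ∧
      p.isMemBlock ij.1 ij.2 ∧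
      ij.2 * (p.max_sz / 4 ^ ij.1) ≤ addr ∧
      addr < (ij.2 + 1) * (p.max_sz / 4 ^ ij.1)

end BuddyMem

open BuddyMem in
/-- **Memory partition theorem** for buddy memory pools: a consistent
configuration with well-shaped bitmaps satisfies the memory partition
property. -/
theorem memory_partition (p : MemPool)
    (h1 : inv_mempool_info p) (h2 : inv_bitmap p)
    (h3 : inv_bitmap0 p) (h4 : inv_bitmapn p) :
    mem_part p := by
  classical
  obtain ⟨⟨n, hn, hM⟩, hnmax, hL, _, _⟩ := h1
  intro addr haddr
  set L := p.n_levels with hLdef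
  set s : ℕ → ℕ := fun i => 4 * n * 4 ^ (L - i) with hs
  have hs_pos : ∀ i, 0 < s i := fun i => by positivity
  have hMeq : ∀ i ≤ L, p.max_sz = s i * 4 ^ i := by
    intro i hi
    have h4i : (4:ℕ) ^ (L - i) * 4 ^ i = 4 ^ L := by
      rw [← pow_add]; congr 1; omega
    simp only [hs, hM]
    rw [show 4 * n * 4 ^ (L - i) * 4 ^ i = 4 * n * (4 ^ (L - i) * 4 ^ i) from by
      ring, h4i]
  have hpow : ∀ i ≤ L, p.max_sz / 4 ^ i = s i := by
    intro i hi
    exact Nat.div_eq_of_eq_mul_left (by positivity) (hMeq i hi)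
  have hstep : ∀ i, i < L → s i = 4 * s (i + 1) := by
    intro i hi
    simp only [hs]
    rw [show L - i = (L - (i + 1)) + 1 from by omega, pow_succ]
    ring
  set J : ℕ → ℕ := fun i => addr / s i with hJ
  have hJlt : ∀ i < L, J i < p.n_max * 4 ^ i := by
    intro i hi
    apply Nat.div_lt_of_lt_mul
    calc addr < p.n_max * p.max_sz := haddr
      _ = s i * (p.n_max * 4 ^ i) := by rw [hMeq i (le_of_lt hi)]; ring
  have hJstep : ∀ i < L, J (i + 1) / 4 = J i := by
    intro i hi
    simp only [hJ]
    rw [Nat.div_div_eq_div_mul, hstep i hi]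
    congr 1
    ring
  have hup : ∀ k, ∀ i, i + k < L →
      p.bit (i + k) (J (i + k)) = BlockState.DIVIDED →
      p.bit i (J i) = BlockState.DIVIDED := by
    intro k
    induction k with
    | zero => intro i _ h; simpa using h
    | succ k ih =>
      intro i hik hdiv
      have hlt : i + (k + 1) < L := hik
      have hkey := (h2 (i + (k + 1)) hlt (J (i + (k + 1)))
        (hJlt _ hlt)).2.1 hdiv (by omega)
      have hpar : p.bit (i + k) (J (i + k)) = BlockState.DIVIDED := by
        have heq : J (i + (k + 1)) / 4 = J (i + k) := hJstep (i + k) (by omega)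
        have hidx : i + (k + 1) - 1 = i + k := by omega
        rwa [hidx, heq] at hkey
      exact ih i (by omega) hpar
  have hex : ∃ i, i < L ∧ p.bit i (J i) ≠ BlockState.DIVIDED :=
    ⟨L - 1, by omega, h4 _ (hJlt _ (by omega))⟩
  obtain ⟨i₀, ⟨hi₀L, hi₀nd⟩, hi₀min⟩ :
      ∃ i, (i < L ∧ p.bit i (J i) ≠ BlockState.DIVIDED) ∧
        ∀ k < i, ¬(k < L ∧ p.bit k (J k) ≠ BlockState.DIVIDED) :=
    ⟨Nat.find hex, Nat.find_spec hex, fun k hk => Nat.find_min hex hk⟩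
  have hdivbelow : ∀ i < i₀, p.bit i (J i) = BlockState.DIVIDED := by
    intro i hi
    have := hi₀min i hi
    push_neg at this
    exact this (by omega)
  have hne : p.bit i₀ (J i₀) ≠ BlockState.NOEXIST := by
    rcases Nat.eq_zero_or_pos i₀ with h0 | hpos
    · rw [h0]
      have : J 0 < p.n_max := by have := hJlt 0 hL; simpa using this
      exact h3 _ this
    · intro hno
      have hpar := ((h2 i₀ hi₀L (J i₀) (hJlt _ hi₀L)).2.2 hno).2 hpos
      have heq : J i₀ / 4 = J (i₀ - 1) := by
        have := hJstep (i₀ - 1) (by omega)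
        rwa [Nat.sub_add_cancel hpos] at this
      rw [heq] at hpar
      exact hpar (hdivbelow (i₀ - 1) (by omega))
  have hmem : p.isMemBlock i₀ (J i₀) := by
    unfold MemPool.isMemBlock
    cases h : p.bit i₀ (J i₀) with
    | ALLOCATED => exact Or.inl rfl
    | FREE => exact Or.inr (Or.inl rfl)
    | ALLOCATING => exact Or.inr (Or.inr (Or.inl rfl))
    | FREEING => exact Or.inr (Or.inr (Or.inr rfl))
    | DIVIDED => exact absurd h hi₀nd
    | NOEXIST => exact absurd h hne
  have hsz : p.max_sz / 4 ^ i₀ = s i₀ := hpow i₀ (le_of_lt hi₀L)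
  refine ⟨(i₀, J i₀), ⟨hi₀L, hJlt _ hi₀L, hmem, ?_, ?_⟩, ?_⟩
  · rw [hsz]; exact Nat.div_mul_le_self addr (s i₀)
  · rw [hsz]; exact (Nat.div_lt_iff_lt_mul (hs_pos i₀)).1 (Nat.lt_succ_self _)
  · rintro ⟨i', j'⟩ ⟨hi'L, hj', hmem', hlo, hhi⟩
    simp only at hi'L hj' hmem' hlo hhi ⊢
    rw [hpow i' (le_of_lt hi'L)] at hlo hhi
    have hJi' : J i' = j' := Nat.div_eq_of_lt_le hlo hhi
    have hii : i' = i₀ := by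
      rcases lt_trichotomy i' i₀ with h | h | h
      · exfalso
        have hd := hdivbelow i' h
        rw [hJi'] at hd
        rcases hmem' with h' | h' | h' | h' <;> rw [h'] at hd <;>
          exact BlockState.noConfusion hd
      · exact h
      · exfalso
        have hpar := ((h2 i' hi'L j' hj').1 hmem').1 (by omega)
        have heq : J i' / 4 = J (i' - 1) := by
          have := hJstep (i' - 1) (by omega)
          rwa [Nat.sub_add_cancel (by omega : 0 < i')] at this
        rw [← hJi', heq] at hpar
        have := hup (i' - 1 - i₀) i₀ (by omega)
          (by rwa [show i₀ + (i' - 1 - i₀) = i' - 1 from by omega])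
        exact hi₀nd this
    subst hii
    rw [← hJi']
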